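/- The real polynomial p(z) = 229z^5 + 36z^4 − 2z^3 + 32z^2 − 19z − 4 has exactly one positive real root z_0; moreover this root satisfies 5^{−1/2} < z_0 < 1. -/
import Mathlib

private noncomputable def pf : ℝ → ℝ :=
  fun z => 229 * z ^ 5 + 36 * z ^ 4 - 2 * z ^ 3 + 32 * z ^ 2 - 19 * z - 4

private lemma pf_neg_of_small {z : ℝ} (hz : 0 < z) (hz' : z ≤ 0.45) : pf z < 0 := by
  unfold pf
  nlinarith [pow_le_pow_left₀ hz.le hz' 2, pow_le_pow_left₀ hz.le hz' 4,
    mul_pos hz hz, sq_nonneg z, sq_nonneg (z - 0.45)]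

private lemma pf_strictMono {a b : ℝ} (ha : 0.45 ≤ a) (hab : a < b) : pf a < pf b := by
  unfold pf
  have hb : 0.45 ≤ b := le_of_lt (lt_of_le_of_lt ha hab)
  have hQ : 0 < 229 * (a^4 + a^3*b + a^2*b^2 + a*b^3 + b^4)
      + 36 * (a^3 + a^2*b + a*b^2 + b^3) - 2 * (a^2 + a*b + b^2)
      + 32 * (a + b) - 19 := by
    nlinarith [sq_nonneg a, sq_nonneg b, sq_nonneg (a*b), sq_nonneg (a+b),
      mul_nonneg (by linarith : (0:ℝ) ≤ a) (by linarith : (0:ℝ) ≤ b),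
      sq_nonneg (a - 0.45), sq_nonneg (b - 0.45),
      mul_nonneg (mul_nonneg (by linarith : (0:ℝ) ≤ a) (by linarith : (0:ℝ) ≤ a)) (by linarith : (0:ℝ) ≤ b),
      mul_nonneg (mul_nonneg (by linarith : (0:ℝ) ≤ a) (by linarith : (0:ℝ) ≤ b)) (by linarith : (0:ℝ) ≤ b),
      sq_nonneg (a^2 - 0.2025), sq_nonneg (b^2 - 0.2025)]
  nlinarith [mul_pos (sub_pos.2 hab) hQ]

theorem discriminant_poly_unique_positive_root :
    ∃ z₀ : ℝ,
      (0 < z₀ ∧ 229 * z₀ ^ 5 + 36 * z₀ ^ 4 - 2 * z₀ ^ 3 + 32 * z₀ ^ 2 - 19 * z₀ - 4 = 0) ∧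
      (∀ z : ℝ, 0 < z →
        229 * z ^ 5 + 36 * z ^ 4 - 2 * z ^ 3 + 32 * z ^ 2 - 19 * z - 4 = 0 → z = z₀) ∧
      (5 : ℝ) ^ (-(1 : ℝ) / 2) < z₀ ∧ z₀ < 1 := by
  have hcont : ContinuousOn pf (Set.Icc (0.45 : ℝ) 1) := by
    unfold pf; fun_prop
  have h045 : pf 0.45 < 0 := pf_neg_of_small (by norm_num) le_rfl
  have h1 : (0:ℝ) < pf 1 := by unfold pf; norm_num
  have hsub := intermediate_value_Ioo (by norm_num : (0.45:ℝ) ≤ 1) hcont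
  have h0mem : (0:ℝ) ∈ Set.Ioo (pf 0.45) (pf 1) := ⟨h045, h1⟩
  obtain ⟨z₀, hz₀mem, hz₀⟩ := hsub h0mem
  obtain ⟨hz₀l, hz₀u⟩ := hz₀mem
  have hz₀pos : 0 < z₀ := by linarith
  refine ⟨z₀, ⟨hz₀pos, hz₀⟩, ?_, ?_, hz₀u⟩
  · intro z hz hzeq
    have hz45 : 0.45 < z := by
      by_contra h
      push_neg at h
      have := pf_neg_of_small hz h
      unfold pf at this
      linarith
    rcases lt_trichotomy z z₀ with h | h | h
    · exfalso
      have := pf_strictMono hz45.le h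
      rw [hz₀] at this
      have : pf z > 0 → False := by intro hgt; linarith
      exact this (by unfold pf at *; linarith [hzeq])
    · exact h
    · exfalso
      have := pf_strictMono hz₀l.le h
      rw [hz₀] at this
      unfold pf at this; linarith
  · have hsqrt : (5:ℝ) ^ (-(1:ℝ)/2) = (Real.sqrt 5)⁻¹ := by
      rw [Real.sqrt_eq_rpow, ← Real.rpow_neg (by norm_num)]
      norm_num
    rw [hsqrt]
    have h5 : (2.23 : ℝ) < Real.sqrt 5 := by
      have := Real.sq_sqrt (by norm_num : (5:ℝ) ≥ 0)
      nlinarith [Real.sqrt_nonneg 5]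
    have hpos : (0:ℝ) < Real.sqrt 5 := by linarith
    have : (Real.sqrt 5)⁻¹ < 0.45 := by
      rw [inv_lt_comm₀ hpos (by norm_num)]
      norm_num
      linarith
    linarith
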